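/- arXiv:1806.08924 — 4 statements merged into one kernel-verified Lean document; each statement's English description precedes it below -/
import Mathlib

section
/- Let a > 0, γ > 1, and 0 < δ ≤ 1/2. Then there exists a constant c > 0 such that for every r ∈ [2δ, 1/(2δ)] and every ρ ≥ 0 with ρ ∉ [δ, 1/δ], one has E(ρ|r) = H(ρ) − H'(r)(ρ − r) − H(r) ≥ c (1 + ρ^γ). -/
open Real Set

/-- Chord-transfer: the affine part of the relative energy is exact on chords, so a chord
inequality for `x ^ γ` transfers to the relative energy density. -/
private lemma rel_energy_transfer {γ q r ρ t X Y σ : ℝ}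
    (hσ : t * ρ + (1 - t) * r = σ)
    (hY : Y ≤ t * X + (1 - t) * (q * r)) :
    Y - γ * q * σ + (γ - 1) * (q * r) ≤ t * (X - γ * q * ρ + (γ - 1) * (q * r)) := by
  subst hσ
  have key : t * (X - γ * q * ρ + (γ - 1) * (q * r))
      - (Y - γ * q * (t * ρ + (1 - t) * r) + (γ - 1) * (q * r))
      = t * X + (1 - t) * (q * r) - Y := by ring
  linarith [key, hY]

set_option maxHeartbeats 1000000 in
/-- Let `a > 0`, `γ > 1`, and `0 < δ ≤ 1/2`. Then there exists a constant
`c > 0` such that for every `r ∈ [2δ, 1/(2δ)]` and every `ρ ≥ 0` with `ρ ∉ [δ, 1/δ]`, the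
relative energy density `E(ρ|r) = H(ρ) − H'(r)(ρ − r) − H(r)` (with `H(ρ) = (a/(γ−1)) ρ^γ`
and `H'(r) = (aγ/(γ−1)) r^(γ−1)`) satisfies `E(ρ|r) ≥ c (1 + ρ^γ)`. -/
theorem relative_energy_coercive_residual
    (a γ δ : ℝ) (ha : 0 < a) (hγ : 1 < γ) (hδ0 : 0 < δ) (hδ : δ ≤ 1 / 2)
    (H H' : ℝ → ℝ)
    (hH : ∀ ρ : ℝ, H ρ = a / (γ - 1) * ρ ^ γ)
    (hH' : ∀ r : ℝ, H' r = a * γ / (γ - 1) * r ^ (γ - 1)) :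
    ∃ c > (0 : ℝ), ∀ r ∈ Set.Icc (2 * δ) (1 / (2 * δ)), ∀ ρ : ℝ, 0 ≤ ρ →
      ρ ∉ Set.Icc δ (1 / δ) →
      c * (1 + ρ ^ γ) ≤ H ρ - H' r * (ρ - r) - H r := by
  have hγ1 : (0:ℝ) < γ - 1 := by linarith
  set K : ℝ := a / (γ - 1) with hKdef
  have hK : 0 < K := by positivity
  have hP : (0:ℝ) < 2 ^ γ := Real.rpow_pos_of_pos (by norm_num) γ
  -- m := 2^γ - γ - 1 > 0
  have hm0 : 0 < 2 ^ γ - (γ + 1) := by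
    have := one_add_mul_self_lt_rpow_one_add (s := 1) (by norm_num) (by norm_num) hγ
    norm_num at this
    linarith
  set m : ℝ := 2 ^ γ - (γ + 1) with hmdef
  -- h := 2^(1-γ) - (2 - γ) > 0
  have hQ : (0:ℝ) < 2 ^ (1 - γ) := Real.rpow_pos_of_pos (by norm_num) _
  have hh0 : 0 < 2 ^ (1 - γ) - (2 - γ) := by
    rcases le_or_gt 2 γ with h2γ | h2γ
    · have : 2 - γ ≤ 0 := by linarith
      linarith
    · -- 1 < γ < 2 : set u = γ - 1 ∈ (0,1), show 1 - u < 2^(-u)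
      set u : ℝ := γ - 1 with hudef
      have hu0 : 0 < u := hγ1
      have hu1 : u < 1 := by simp only [hudef]; linarith
      have hb : (2:ℝ) ≤ (1 + u) ^ (1 / u) := by
        have := one_add_mul_self_le_rpow_one_add (s := u) (by linarith) (p := 1 / u)
          (by rw [le_div_iff₀ hu0]; linarith)
        have e : 1 + 1 / u * u = 2 := by
          rw [one_div, inv_mul_cancel₀ hu0.ne']; norm_num
        linarith [e ▸ this]
      have h2u : (2:ℝ) ^ u ≤ 1 + u := by
        calc (2:ℝ) ^ u ≤ ((1 + u) ^ (1 / u)) ^ u :=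
              Real.rpow_le_rpow (by norm_num) hb hu0.le
          _ = (1 + u) ^ (1 / u * u) := by
              rw [← Real.rpow_mul (by linarith : (0:ℝ) ≤ 1 + u)]
          _ = 1 + u := by
              rw [one_div_mul_cancel hu0.ne', Real.rpow_one]
      have h2upos : (0:ℝ) < 2 ^ u := Real.rpow_pos_of_pos (by norm_num) u
      have hinv : (2:ℝ) ^ (1 - γ) * 2 ^ u = 1 := by
        rw [← Real.rpow_add (by norm_num : (0:ℝ) < 2)]
        simp [hudef]
      have hgoal : 2 - γ = 1 - u := by simp [hudef]; ring
      rw [hgoal]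
      have ha1 : (1 - u) * 2 ^ u ≤ (1 - u) * (1 + u) :=
        mul_le_mul_of_nonneg_left h2u (by linarith)
      have ha2 : (1 - u) * (1 + u) < 1 := by nlinarith [mul_pos hu0 hu0]
      have ha3 : (1 - u) * 2 ^ u < 2 ^ (1 - γ) * 2 ^ u :=
        lt_of_lt_of_eq (lt_of_le_of_lt ha1 ha2) hinv.symm
      have ha4 : 1 - u < 2 ^ (1 - γ) := lt_of_mul_lt_mul_right ha3 h2upos.le
      linarith
  set h : ℝ := 2 ^ (1 - γ) - (2 - γ) with hhdef
  set D : ℝ := m + 2 * γ with hDdef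
  have hD : 0 < D := by have : 0 < m := hm0; simp only [hDdef]; linarith
  set c₁ : ℝ := K * (2 * δ) ^ γ * h / 4 with hc₁def
  set c₂ : ℝ := K * m * 2 ^ (1 - γ) / (2 * D) with hc₂def
  have hδγ : (0:ℝ) < (2 * δ) ^ γ := Real.rpow_pos_of_pos (by linarith) γ
  have hc₁ : 0 < c₁ := by positivity
  have hc₂ : 0 < c₂ := by
    have : 0 < m := hm0
    positivity
  refine ⟨min c₁ c₂, lt_min hc₁ hc₂, ?_⟩
  rintro r ⟨hr1, hr2⟩ ρ hρ hout
  have hr : 0 < r := lt_of_lt_of_le (by linarith) hr1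
  set q : ℝ := r ^ (γ - 1) with hqdef
  have hq : 0 < q := Real.rpow_pos_of_pos hr _
  have hqr : q * r = r ^ γ := by
    rw [hqdef, ← Real.rpow_add_one hr.ne' (γ - 1), sub_add_cancel]
  set X : ℝ := ρ ^ γ with hXdef
  have hX0 : 0 ≤ X := Real.rpow_nonneg hρ γ
  -- rewrite the goal as K * (relative energy polynomial)
  rw [hH, hH, hH']
  have hE : a / (γ - 1) * ρ ^ γ - a * γ / (γ - 1) * r ^ (γ - 1) * (ρ - r)
      - a / (γ - 1) * r ^ γ = K * (X - γ * q * ρ + (γ - 1) * (q * r)) := by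
    rw [← hqr, ← hqdef, ← hXdef, hKdef]
    field_simp
    ring
  rw [hE]
  -- relative energy is nonnegative (Bernoulli / tangent line inequality)
  have hg0 : 0 ≤ X - γ * q * ρ + (γ - 1) * (q * r) := by
    have hb := one_add_mul_self_le_rpow_one_add (s := ρ / r - 1)
      (by have : 0 ≤ ρ / r := div_nonneg hρ hr.le; linarith) hγ.le
    have e1 : 1 + (ρ / r - 1) = ρ / r := by ring
    rw [e1] at hb
    have e2 : (ρ / r) ^ γ = X / (q * r) := by
      rw [Real.div_rpow hρ hr.le, hqr, hXdef]
    rw [e2, le_div_iff₀ (by positivity : (0:ℝ) < q * r)] at hb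
    have e3 : (1 + γ * (ρ / r - 1)) * (q * r) = q * r + γ * q * ρ - γ * (q * r) := by
      field_simp
      ring
    rw [e3] at hb
    linarith
  clear_value K m h D c₁ c₂ q X
  -- split on the residual alternative
  have hout' : ρ < δ ∨ 1 / δ < ρ := by
    rcases lt_or_ge ρ δ with h | h
    · exact Or.inl h
    · right
      by_contra hcon
      push_neg at hcon
      exact hout ⟨h, hcon⟩
  have hcvx := convexOn_rpow hγ.le
  rcases hout' with hsmall | hbig
  · -- Case ρ < δ ≤ r/2
    have hρr : ρ ≤ r / 2 := by linarith
    have hrρ : r / 2 ≤ r - ρ := by linarith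
    have hrρ0 : 0 < r - ρ := by linarith
    set t : ℝ := (r / 2) / (r - ρ) with htdef
    have ht0 : 0 < t := by positivity
    have ht1 : t ≤ 1 := by
      rw [htdef, div_le_one hrρ0]; linarith
    have hσ : t * ρ + (1 - t) * r = r / 2 := by
      rw [htdef]; field_simp; ring
    clear_value t
    have hcc := hcvx.2 (Set.mem_Ici.mpr hρ) (Set.mem_Ici.mpr hr.le) ht0.le
      (by linarith : (0:ℝ) ≤ 1 - t) (by ring)
    simp only [smul_eq_mul] at hcc
    rw [hσ, ← hXdef, ← hqr] at hcc
    have hkey := rel_energy_transfer (γ := γ) (q := q) hσ hcc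
    -- value at r/2
    have hhalf : (r / 2) ^ γ = q * r / 2 ^ γ := by
      rw [Real.div_rpow hr.le (by norm_num), hqr]
    have h2P : (2:ℝ) ^ (1 - γ) * 2 ^ γ = 2 := by
      rw [← Real.rpow_add (by norm_num : (0:ℝ) < 2)]
      norm_num
    have hinv2 : (2:ℝ) ^ (1 - γ) = 2 / 2 ^ γ := by
      rw [eq_div_iff hP.ne']; exact h2P
    have hval : (r / 2) ^ γ - γ * q * (r / 2) + (γ - 1) * (q * r) = q * r * h / 2 := by
      rw [hhalf, hhdef, hinv2]
      field_simp
      ring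
    rw [hval] at hkey
    have hgA : q * r * h / 2 ≤ X - γ * q * ρ + (γ - 1) * (q * r) := by
      have h1 : t * (X - γ * q * ρ + (γ - 1) * (q * r))
          ≤ 1 * (X - γ * q * ρ + (γ - 1) * (q * r)) :=
        mul_le_mul_of_nonneg_right ht1 hg0
      linarith
    have hr2δ : (2 * δ) ^ γ ≤ q * r := by
      rw [hqr]; exact Real.rpow_le_rpow (by linarith) hr1 (by linarith)
    have hX1 : X ≤ 1 := by
      rw [hXdef]; exact Real.rpow_le_one hρ (by linarith) (by linarith)
    have hs2 : K * (2 * δ) ^ γ * h ≤ K * (q * r) * h :=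
      mul_le_mul_of_nonneg_right (mul_le_mul_of_nonneg_left hr2δ hK.le) (le_of_lt hh0)
    have hs3 : K * (q * r * h / 2) ≤ K * (X - γ * q * ρ + (γ - 1) * (q * r)) :=
      mul_le_mul_of_nonneg_left hgA hK.le
    have hcmin : min c₁ c₂ ≤ c₁ := min_le_left _ _
    have stepA1 : min c₁ c₂ * (1 + X) ≤ c₁ * (1 + X) :=
      mul_le_mul_of_nonneg_right hcmin (by linarith)
    have stepA2 : c₁ * (1 + X) ≤ c₁ * 2 :=
      mul_le_mul_of_nonneg_left (by linarith) hc₁.le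
    have hc1e : c₁ * 2 = K * (2 * δ) ^ γ * h / 2 := by rw [hc₁def]; ring
    linarith [hs2, hs3, stepA1, stepA2, hc1e]
  · -- Case ρ > 1/δ ≥ 2r
    have hδinv : (2:ℝ) ≤ 1 / δ := by rw [le_div_iff₀ hδ0]; linarith
    have hρ2r : 2 * r ≤ ρ := by
      have h1 : 2 * r ≤ 2 * (1 / (2 * δ)) := by linarith
      have h2 : 2 * (1 / (2 * δ)) = 1 / δ := by field_simp
      linarith
    have hρ1 : 1 ≤ ρ := by linarith
    have hX1 : 1 ≤ X := by
      rw [hXdef]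
      have := Real.rpow_le_rpow (by norm_num : (0:ℝ) ≤ 1) hρ1 (by linarith : (0:ℝ) ≤ γ)
      rwa [Real.one_rpow] at this
    -- bound B : 2^(1-γ) X - γ q ρ ≤ g
    have h21 : (2:ℝ) ^ (1 - γ) ≤ 1 :=
      Real.rpow_le_one_of_one_le_of_nonpos (by norm_num) (by linarith)
    have hB : 2 ^ (1 - γ) * X - γ * q * ρ ≤ X - γ * q * ρ + (γ - 1) * (q * r) := by
      have h1 : 2 ^ (1 - γ) * X ≤ 1 * X := mul_le_mul_of_nonneg_right h21 hX0
      have h2 : 0 ≤ (γ - 1) * (q * r) := by positivity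
      linarith
    -- bound C : chord at 2r
    have hρr0 : 0 < ρ - r := by linarith
    set t : ℝ := r / (ρ - r) with htdef
    have ht0 : 0 < t := by positivity
    have ht1 : t ≤ 1 := by rw [htdef, div_le_one hρr0]; linarith
    have hσ : t * ρ + (1 - t) * r = 2 * r := by
      rw [htdef]; field_simp; ring
    have htr : t * (ρ - r) = r := by rw [htdef]; field_simp
    have hcc := hcvx.2 (Set.mem_Ici.mpr hρ) (Set.mem_Ici.mpr hr.le) ht0.le
      (by linarith : (0:ℝ) ≤ 1 - t) (by ring)
    simp only [smul_eq_mul] at hcc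
    rw [hσ, ← hXdef, ← hqr] at hcc
    have hkey := rel_energy_transfer (γ := γ) (q := q) hσ hcc
    have h2r : (2 * r) ^ γ = 2 ^ γ * (q * r) := by
      rw [Real.mul_rpow (by norm_num) hr.le, hqr]
    have hval : (2 * r) ^ γ - γ * q * (2 * r) + (γ - 1) * (q * r) = m * (q * r) := by
      rw [h2r, hmdef]; ring
    rw [hval] at hkey
    -- turn hkey into  m * q * (ρ - r) ≤ g
    clear_value t
    have hC : m * q * (ρ - r) ≤ X - γ * q * ρ + (γ - 1) * (q * r) := by
      have h1 : m * (q * r) * (ρ - r) ≤ t * (X - γ * q * ρ + (γ - 1) * (q * r)) * (ρ - r) :=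
        mul_le_mul_of_nonneg_right hkey hρr0.le
      have h2 : t * (X - γ * q * ρ + (γ - 1) * (q * r)) * (ρ - r)
          = (X - γ * q * ρ + (γ - 1) * (q * r)) * r := by
        calc t * (X - γ * q * ρ + (γ - 1) * (q * r)) * (ρ - r)
            = (X - γ * q * ρ + (γ - 1) * (q * r)) * (t * (ρ - r)) := by ring
          _ = (X - γ * q * ρ + (γ - 1) * (q * r)) * r := by rw [htr]
      rw [h2] at h1
      have h3 : m * q * (ρ - r) * r ≤ (X - γ * q * ρ + (γ - 1) * (q * r)) * r := by
        calc m * q * (ρ - r) * r = m * (q * r) * (ρ - r) := by ring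
          _ ≤ (X - γ * q * ρ + (γ - 1) * (q * r)) * r := h1
      exact le_of_mul_le_mul_right h3 hr
    have hC2 : m * q * (ρ / 2) ≤ X - γ * q * ρ + (γ - 1) * (q * r) := by
      have : m * q * (ρ / 2) ≤ m * q * (ρ - r) :=
        mul_le_mul_of_nonneg_left (by linarith) (by positivity)
      linarith
    -- combine: m * 2^(1-γ) * X ≤ D * g
    have hfin : m * (2 ^ (1 - γ) * X) ≤ D * (X - γ * q * ρ + (γ - 1) * (q * r)) := by
      have h1 := mul_le_mul_of_nonneg_left hB hm0.le
      have h2 := mul_le_mul_of_nonneg_left hC2 (by linarith : (0:ℝ) ≤ 2 * γ)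
      rw [hDdef]
      linarith [h1, h2]
    -- conclude
    have hcmin : min c₁ c₂ ≤ c₂ := min_le_right _ _
    have step : K * m * 2 ^ (1 - γ) * (1 + X) ≤ 2 * D * (K * (X - γ * q * ρ + (γ - 1) * (q * r))) := by
      have h1 := mul_le_mul_of_nonneg_left hfin hK.le
      have h2 : 1 + X ≤ 2 * X := by linarith
      have h3 : (0:ℝ) ≤ K * m * 2 ^ (1 - γ) := by positivity
      linarith [h1, mul_le_mul_of_nonneg_left h2 h3]
    have hc₂le : c₂ * (1 + X) ≤ K * (X - γ * q * ρ + (γ - 1) * (q * r)) := by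
      rw [hc₂def, div_mul_eq_mul_div, div_le_iff₀ (by positivity : (0:ℝ) < 2 * D)]
      linarith [step]
    have : min c₁ c₂ * (1 + X) ≤ c₂ * (1 + X) :=
      mul_le_mul_of_nonneg_right hcmin (by linarith)
    linarith
end

section
/- Let a > 0, γ > 1, and 0 < δ ≤ 1/2, and let q : [0,∞) → ℝ be Lipschitz continuous with q(ρ) = 0 for all ρ ∉ [2δ, 1/(2δ)]. Then there exists a constant C > 0 such that for every r ∈ [2δ, 1/(2δ)] and every ρ ≥ 0, one has (q(ρ) − q(r))² ≤ C · E(ρ|r), where E(ρ|r) = H(ρ) − H'(r)(ρ − r) − H(r). -/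
/-!
Clamping `ρ` to `J = [δ, 1/δ]`, an interval containing the support of `q` with room on both sides,
does not change `q ρ`, and can only decrease `E(ρ|r)` because `E(·|r)` is monotone on either side
of `r`. On `J` the second derivative `aγ ρ^(γ-2)` of `H` is bounded below by some `m > 0`, so for
the clamped value `s` we get `E(s|r) ≥ m (s - r)² / 2`, which dominates the Lipschitz bound
`(q s - q r)² ≤ K² (s - r)²`.
-/

open Set

section Convex

variable {S : Set ℝ} {f : ℝ → ℝ}

theorem ConvexOn.add_mul_sub_le_of_hasDerivAt {f' x y : ℝ} (hf : ConvexOn ℝ S f) (hx : x ∈ S)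
    (hy : y ∈ S) (hd : HasDerivAt f f' x) : f x + f' * (y - x) ≤ f y := by
  rcases lt_trichotomy x y with h | rfl | h
  · have := hf.le_slope_of_hasDerivAt hx hy h hd
    rw [slope_def_field, le_div_iff₀ (sub_pos.mpr h)] at this
    linarith
  · simp
  · have := hf.slope_le_of_hasDerivAt hy hx h hd
    rw [slope_def_field, div_le_iff₀ (sub_pos.mpr h)] at this
    linarith

theorem ConvexOn.le_of_hasDerivAt_of_le {f'x f'y x y : ℝ} (hf : ConvexOn ℝ S f) (hx : x ∈ S)
    (hy : y ∈ S) (hxy : x ≤ y) (hdx : HasDerivAt f f'x x) (hdy : HasDerivAt f f'y y) :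
    f'x ≤ f'y := by
  rcases hxy.eq_or_lt with rfl | h
  · exact (hdx.unique hdy).le
  · exact (hf.le_slope_of_hasDerivAt hx hy h hdx).trans (hf.slope_le_of_hasDerivAt hx hy h hdy)

end Convex

/-- The paper's `E(ρ|r)`: the Bregman divergence of `f` when `f'` is its derivative. -/
def relEnergy (f f' : ℝ → ℝ) (ρ r : ℝ) : ℝ := f ρ - f' r * (ρ - r) - f r

section RelEnergy

variable {S : Set ℝ} {f f' : ℝ → ℝ}

theorem relEnergy_le_relEnergy_of_mem_uIcc {r s ρ : ℝ} (hf : ConvexOn ℝ S f) (hr : r ∈ S)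
    (hs : s ∈ S) (hρ : ρ ∈ S) (hdr : HasDerivAt f (f' r) r) (hds : HasDerivAt f (f' s) s)
    (hsρ : s ∈ uIcc r ρ) : relEnergy f f' s r ≤ relEnergy f f' ρ r := by
  have htangent := hf.add_mul_sub_le_of_hasDerivAt hs hρ hds
  have hsign : 0 ≤ (f' s - f' r) * (ρ - s) := by
    rcases mem_uIcc.mp hsρ with ⟨hrs, hsρ'⟩ | ⟨hρs, hsr⟩
    · exact mul_nonneg (sub_nonneg.mpr (hf.le_of_hasDerivAt_of_le hr hs hrs hdr hds))
        (sub_nonneg.mpr hsρ')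
    · exact mul_nonneg_of_nonpos_of_nonpos
        (sub_nonpos.mpr (hf.le_of_hasDerivAt_of_le hs hr hsr hds hdr)) (sub_nonpos.mpr hρs)
  unfold relEnergy
  linarith

/-- A lower bound `m` on `f''` makes the relative energy at least quadratic: apply the tangent
line inequality to the convex function `f - m x² / 2`. -/
theorem mul_sq_le_relEnergy {f'' : ℝ → ℝ} {m r ρ : ℝ} (hS : Convex ℝ S)
    (hf : ∀ x ∈ S, HasDerivAt f (f' x) x) (hf' : ∀ x ∈ S, HasDerivAt f' (f'' x) x)
    (hm : ∀ x ∈ S, m ≤ f'' x) (hr : r ∈ S) (hρ : ρ ∈ S) :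
    m / 2 * (ρ - r) ^ 2 ≤ relEnergy f f' ρ r := by
  have hg : ∀ x ∈ S, HasDerivAt (fun x => f x - m / 2 * x ^ 2) (f' x - m * x) x := fun x hx =>
    ((hf x hx).sub ((hasDerivAt_pow 2 x).const_mul (m / 2))).congr_deriv (by ring)
  have hg' : ∀ x ∈ S, HasDerivAt (fun x => f' x - m * x) (f'' x - m) x := fun x hx =>
    ((hf' x hx).sub ((hasDerivAt_id' x).const_mul m)).congr_deriv (by ring)
  have hconv : ConvexOn ℝ S fun x => f x - m / 2 * x ^ 2 :=
    convexOn_of_hasDerivWithinAt2_nonneg hS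
      (fun x hx => (hg x hx).continuousAt.continuousWithinAt)
      (fun x hx => (hg x (interior_subset hx)).hasDerivWithinAt)
      (fun x hx => (hg' x (interior_subset hx)).hasDerivWithinAt)
      (fun x hx => sub_nonneg.mpr (hm x (interior_subset hx)))
  have := hconv.add_mul_sub_le_of_hasDerivAt hr hρ (hg r hr)
  unfold relEnergy
  linarith

end RelEnergy

theorem max_min_mem_uIcc {α β r ρ : ℝ} (hr : r ∈ Icc α β) : max α (min ρ β) ∈ uIcc r ρ := by
  rw [mem_uIcc]
  rcases le_total r ρ with h | h
  · exact Or.inl ⟨le_max_of_le_right (le_min h hr.2), max_le (hr.1.trans h) (min_le_left _ _)⟩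
  · exact Or.inr ⟨le_max_of_le_right (le_min le_rfl (h.trans hr.2)),
      max_le hr.1 ((min_le_left _ _).trans h)⟩

theorem apply_max_min_eq_of_eq_zero {q : ℝ → ℝ} {α β ρ : ℝ} (hα : ∀ x, 0 ≤ x → x ≤ α → q x = 0)
    (hβ : ∀ x, β ≤ x → q x = 0) (hα0 : 0 ≤ α) (hαβ : α ≤ β) (hρ : 0 ≤ ρ) :
    q (max α (min ρ β)) = q ρ := by
  rcases le_total ρ α with hρα | hαρ
  · rw [max_eq_left ((min_le_left _ _).trans hρα), hα α hα0 le_rfl, hα ρ hρ hρα]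
  rcases le_total ρ β with hρβ | hβρ
  · rw [min_eq_left hρβ, max_eq_right hαρ]
  · rw [min_eq_right hβρ, max_eq_right hαβ, hβ β le_rfl, hβ ρ hβρ]

theorem LipschitzOnWith.sq_sub_le {s : Set ℝ} {K : NNReal} {q : ℝ → ℝ} (hq : LipschitzOnWith K q s)
    {x y : ℝ} (hx : x ∈ s) (hy : y ∈ s) : (q x - q y) ^ 2 ≤ K ^ 2 * (x - y) ^ 2 := by
  have := hq.dist_le_mul x hx y hy
  rw [Real.dist_eq, Real.dist_eq] at this
  rw [← sq_abs, ← sq_abs (x - y), ← mul_pow]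
  exact pow_le_pow_left₀ (abs_nonneg _) this 2

theorem hasDerivAt_div_sub_one_mul_rpow (a γ : ℝ) {x : ℝ} (hx : x ≠ 0) :
    HasDerivAt (fun x => a / (γ - 1) * x ^ γ) (a * γ / (γ - 1) * x ^ (γ - 1)) x :=
  ((Real.hasDerivAt_rpow_const (p := γ) (Or.inl hx)).const_mul (a / (γ - 1))).congr_deriv
    (by ring)

theorem hasDerivAt_mul_div_sub_one_mul_rpow (a : ℝ) {γ x : ℝ} (hγ : γ ≠ 1) (hx : x ≠ 0) :
    HasDerivAt (fun x => a * γ / (γ - 1) * x ^ (γ - 1)) (a * γ * x ^ (γ - 2)) x := by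
  refine ((Real.hasDerivAt_rpow_const (p := γ - 1) (Or.inl hx)).const_mul
    (a * γ / (γ - 1))).congr_deriv ?_
  rw [show γ - 1 - 1 = γ - 2 by ring]
  field_simp [sub_ne_zero.mpr hγ]

theorem sq_sub_le_mul_relEnergy {f f' f'' q : ℝ → ℝ} {K : NNReal} {α β m r ρ : ℝ} (hα : 0 ≤ α)
    (hf : ConvexOn ℝ (Ici 0) f) (hf' : ∀ x ∈ Icc α β, HasDerivAt f (f' x) x)
    (hf'' : ∀ x ∈ Icc α β, HasDerivAt f' (f'' x) x) (hm0 : 0 < m) (hm : ∀ x ∈ Icc α β, m ≤ f'' x)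
    (hq : LipschitzOnWith K q (Ici 0)) (hqα : ∀ x, 0 ≤ x → x ≤ α → q x = 0)
    (hqβ : ∀ x, β ≤ x → q x = 0) (hr : r ∈ Icc α β) (hρ : 0 ≤ ρ) :
    (q ρ - q r) ^ 2 ≤ 2 * (K ^ 2 + 1) / m * relEnergy f f' ρ r := by
  set s := max α (min ρ β)
  have hαβ : α ≤ β := hr.1.trans hr.2
  have hs : s ∈ Icc α β := ⟨le_max_left _ _, max_le hαβ (min_le_right _ _)⟩
  calc (q ρ - q r) ^ 2 = (q s - q r) ^ 2 := by rw [apply_max_min_eq_of_eq_zero hqα hqβ hα hαβ hρ]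
    _ ≤ K ^ 2 * (s - r) ^ 2 := hq.sq_sub_le (hα.trans hs.1) (hα.trans hr.1)
    _ ≤ (K ^ 2 + 1) * (s - r) ^ 2 := by gcongr; linarith
    _ = 2 * (K ^ 2 + 1) / m * (m / 2 * (s - r) ^ 2) := by field_simp
    _ ≤ 2 * (K ^ 2 + 1) / m * relEnergy f f' s r := by
      gcongr
      exact mul_sq_le_relEnergy (convex_Icc _ _) hf' hf'' hm hr hs
    _ ≤ 2 * (K ^ 2 + 1) / m * relEnergy f f' ρ r := by
      gcongr
      exact relEnergy_le_relEnergy_of_mem_uIcc hf (hα.trans hr.1) (hα.trans hs.1) hρ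
        (hf' r hr) (hf' s hs) (max_min_mem_uIcc hr)

theorem pressure_perturbation_controlled_by_relative_energy_general
    (a γ δ : ℝ) (ha : 0 < a) (hγ : 1 < γ) (hδ0 : 0 < δ)
    (q : ℝ → ℝ) (K : NNReal) (hq : LipschitzOnWith K q (Set.Ici 0))
    (hq0 : ∀ ρ : ℝ, 0 ≤ ρ → ρ ∉ Set.Icc (2 * δ) (1 / (2 * δ)) → q ρ = 0)
    (H H' : ℝ → ℝ)
    (hH : ∀ ρ : ℝ, H ρ = a / (γ - 1) * ρ ^ γ)
    (hH' : ∀ r : ℝ, H' r = a * γ / (γ - 1) * r ^ (γ - 1)) :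
    ∃ C > (0 : ℝ), ∀ r ∈ Set.Icc (2 * δ) (1 / (2 * δ)), ∀ ρ : ℝ, 0 ≤ ρ →
      (q ρ - q r) ^ 2 ≤ C * (H ρ - H' r * (ρ - r) - H r) := by
  have hJ : ∀ x ∈ Icc δ (1 / δ), x ≠ 0 := fun x hx => (hδ0.trans_le hx.1).ne'
  have hH_convex : ConvexOn ℝ (Ici 0) H := by
    rw [funext hH]
    exact (convexOn_rpow hγ.le).smul (div_nonneg ha.le (by linarith))
  have hH_deriv : ∀ x ∈ Icc δ (1 / δ), HasDerivAt H (H' x) x := by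
    rw [funext hH, funext hH']
    exact fun x hx => hasDerivAt_div_sub_one_mul_rpow a γ (hJ x hx)
  have hH'_deriv : ∀ x ∈ Icc δ (1 / δ), HasDerivAt H' (a * γ * x ^ (γ - 2)) x := by
    rw [funext hH']
    exact fun x hx => hasDerivAt_mul_div_sub_one_mul_rpow a hγ.ne' (hJ x hx)
  have hH''_cont : ContinuousOn (fun x => a * γ * x ^ (γ - 2)) (Icc δ (1 / δ)) := fun x hx =>
    ((Real.continuousAt_rpow_const x _ (Or.inl (hJ x hx))).const_mul _).continuousWithinAt
  obtain ⟨m, hm0, hm⟩ := isCompact_Icc.exists_forall_le' hH''_cont fun x hx => by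
    have := hδ0.trans_le hx.1
    positivity
  refine ⟨2 * (K ^ 2 + 1) / m, by positivity, fun r hr ρ hρ => ?_⟩
  have hrJ : r ∈ Icc δ (1 / δ) :=
    ⟨by linarith [hr.1], hr.2.trans (one_div_le_one_div_of_le hδ0 (by linarith))⟩
  have hδ_lt : 1 / (2 * δ) < 1 / δ := one_div_lt_one_div_of_lt hδ0 (by linarith)
  exact sq_sub_le_mul_relEnergy hδ0.le hH_convex hH_deriv hH'_deriv hm0 hm hq
    (fun x hx hxδ => hq0 x hx fun h => by linarith [h.1])
    (fun x hx => hq0 x (by linarith [hrJ.1, hrJ.2]) fun h => by linarith [h.2]) hrJ hρ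

/-- Let `a > 0`, `γ > 1`, `0 < δ ≤ 1/2`, and let `q : [0,∞) → ℝ` be Lipschitz
continuous with `q(ρ) = 0` for all `ρ ∉ [2δ, 1/(2δ)]`. Then there exists a constant `C > 0`
such that for every `r ∈ [2δ, 1/(2δ)]` and every `ρ ≥ 0`, one has
`(q(ρ) − q(r))² ≤ C · E(ρ|r)`, where `E(ρ|r) = H(ρ) − H'(r)(ρ − r) − H(r)` with
`H(ρ) = (a/(γ−1)) ρ^γ` and `H'(r) = (aγ/(γ−1)) r^(γ−1)`. -/
theorem pressure_perturbation_controlled_by_relative_energy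
    (a γ δ : ℝ) (ha : 0 < a) (hγ : 1 < γ) (hδ0 : 0 < δ) (hδ : δ ≤ 1 / 2)
    (q : ℝ → ℝ) (K : NNReal) (hq : LipschitzOnWith K q (Set.Ici 0))
    (hq0 : ∀ ρ : ℝ, 0 ≤ ρ → ρ ∉ Set.Icc (2 * δ) (1 / (2 * δ)) → q ρ = 0)
    (H H' : ℝ → ℝ)
    (hH : ∀ ρ : ℝ, H ρ = a / (γ - 1) * ρ ^ γ)
    (hH' : ∀ r : ℝ, H' r = a * γ / (γ - 1) * r ^ (γ - 1)) :
    ∃ C > (0 : ℝ), ∀ r ∈ Set.Icc (2 * δ) (1 / (2 * δ)), ∀ ρ : ℝ, 0 ≤ ρ →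
      (q ρ - q r) ^ 2 ≤ C * (H ρ - H' r * (ρ - r) - H r) :=
  pressure_perturbation_controlled_by_relative_energy_general a γ δ ha hγ hδ0 q K hq hq0 H H' hH hH'
end

section
/- Let N ≥ 1 be an integer, a > 0, γ > 1, and 0 < δ ≤ 1/2. Then for every ε > 0 there exists a constant C > 0 such that for every r ∈ [2δ, 1/(2δ)], every ρ ≥ 0, and every v ∈ ℝᴺ, one has |ρ − r| · |v| ≤ C ( E(ρ|r) + ρ |v|² ) + ε |v|², where E(ρ|r) = H(ρ) − H'(r)(ρ − r) − H(r) and |v| is the Euclidean norm. -/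
/-!
With `f x = k x ^ γ`, `k = a / (γ - 1)`, the relative energy is the Bregman divergence
`f ρ - f r - f' r (ρ - r)`. For `r ∈ [2δ, 1/(2δ)]` and `|ρ - r| ≤ δ` both points lie in an interval
bounded away from `0` and `∞` on which `f'' ≥ α > 0`, so the divergence is at least
`α/2 (ρ - r)²`; since it is convex in `ρ` and vanishes at `r`, this quadratic growth becomes linear
growth `α δ/2 |ρ - r|` farther out. The cross term is then absorbed by Young's inequality while
`|ρ - r|` is bounded, and for large `ρ` by `|ρ - r| |v| ≤ ρ (1 + |v|²) / 2`.
-/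

open Set Real

theorem ConvexOn.add_deriv_mul_sub_le {s : Set ℝ} {f : ℝ → ℝ} {f' x y : ℝ}
    (hf : ConvexOn ℝ s f) (hx : x ∈ s) (hy : y ∈ s) (hfx : HasDerivAt f f' x) :
    f x + f' * (y - x) ≤ f y := by
  rcases lt_trichotomy x y with hxy | rfl | hxy
  · have h := hf.le_slope_of_hasDerivAt hx hy hxy hfx
    rw [slope_def_field, le_div_iff₀ (sub_pos.2 hxy)] at h
    linarith
  · simp
  · have h := hf.slope_le_of_hasDerivAt hy hx hxy hfx
    rw [slope_def_field, div_le_iff₀ (sub_pos.2 hxy)] at h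
    linarith

theorem add_deriv_mul_sub_add_sq_le_of_le_deriv2 {s : Set ℝ} {f f' f'' : ℝ → ℝ} {α x y : ℝ}
    (hs : Convex ℝ s) (hf : ∀ z ∈ s, HasDerivAt f (f' z) z)
    (hf' : ∀ z ∈ interior s, HasDerivAt f' (f'' z) z) (hα : ∀ z ∈ interior s, α ≤ f'' z)
    (hx : x ∈ s) (hy : y ∈ s) :
    f x + f' x * (y - x) + α / 2 * (y - x) ^ 2 ≤ f y := by
  have hsq (z : ℝ) : HasDerivAt (fun z => α / 2 * z ^ 2) (α * z) z :=
    ((hasDerivAt_pow 2 z).const_mul (α / 2)).congr_deriv (by push_cast; ring)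
  have hg : ConvexOn ℝ s (fun z => f z - α / 2 * z ^ 2) := by
    refine convexOn_of_hasDerivWithinAt2_nonneg hs (f' := fun z => f' z - α * z)
      (f'' := fun z => f'' z - α) ?_ ?_ ?_ ?_
    · exact fun z hz => ((hf z hz).fun_sub (hsq z)).continuousAt.continuousWithinAt
    · exact fun z hz => ((hf z (interior_subset hz)).fun_sub (hsq z)).hasDerivWithinAt
    · exact fun z hz =>
        ((hf' z hz).fun_sub ((hasDerivAt_id' z).const_mul α)).hasDerivWithinAt.congr_deriv (by ring)
    · exact fun z hz => sub_nonneg.2 (hα z hz)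
  have := hg.add_deriv_mul_sub_le hx hy ((hf x hx).fun_sub (hsq x))
  linear_combination this

theorem ConvexOn.mul_min_le_of_mul_sq_le {s : Set ℝ} {f : ℝ → ℝ} {c κ d r y : ℝ}
    (hf : ConvexOn ℝ s f) (hr : r ∈ s) (hκ : 0 ≤ κ) (hd : 0 < d)
    (hnear : ∀ z ∈ s, |z - r| ≤ d → κ * (z - r) ^ 2 ≤ f z - f r - c * (z - r))
    (hy : y ∈ s) :
    κ * min ((y - r) ^ 2) (d * |y - r|) ≤ f y - f r - c * (y - r) := by
  rcases le_or_gt |y - r| d with hyd | hyd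
  · exact (mul_le_mul_of_nonneg_left (min_le_left _ _) hκ).trans (hnear y hy hyd)
  refine (mul_le_mul_of_nonneg_left (min_le_right _ _) hκ).trans ?_
  -- At `r + t (y - r)`, at distance `d` from `r`, convexity bounds the left side by `t` times
  -- the right side.
  set t := d / |y - r| with ht
  have hyr : 0 < |y - r| := hd.trans hyd
  have ht0 : 0 ≤ t := by positivity
  have ht1 : t ≤ 1 := (div_le_one hyr).2 hyd.le
  have hz := hf.2 hy hr ht0 (sub_nonneg.2 ht1) (add_sub_cancel t 1)
  have hzr : t • y + (1 - t) • r - r = t * (y - r) := by simp only [smul_eq_mul]; ring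
  have hdist : |t * (y - r)| = d := by
    rw [abs_mul, abs_of_nonneg ht0, ht, div_mul_cancel₀ _ hyr.ne']
  have hnear' := hnear _ (hf.1 hy hr ht0 (sub_nonneg.2 ht1) (add_sub_cancel t 1))
    (by rw [hzr, hdist])
  rw [hzr] at hnear'
  simp only [smul_eq_mul] at hz hnear'
  have key : t * (κ * (d * |y - r|)) ≤ t * (f y - f r - c * (y - r)) := by
    have : t * (κ * (d * |y - r|)) = κ * (t * (y - r)) ^ 2 := by
      rw [mul_pow, ← sq_abs (y - r), ht]; field_simp
    nlinarith
  exact le_of_mul_le_mul_left key (by positivity)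

theorem min_rpow_le_rpow {lo hi x p : ℝ} (hlo : 0 < lo) (hx : x ∈ Icc lo hi) :
    min (lo ^ p) (hi ^ p) ≤ x ^ p := by
  rcases le_total 0 p with hp | hp
  · exact (min_le_left _ _).trans (rpow_le_rpow hlo.le hx.1 hp)
  · exact (min_le_right _ _).trans (rpow_le_rpow_of_nonpos (hlo.trans_le hx.1) hx.2 hp)

theorem exists_pos_mul_min_le_rpow_sub_tangent {k γ m M : ℝ} (hk : 0 < k) (hγ : 1 < γ)
    (hm : 0 < m) (hmM : m ≤ M) :
    ∃ c > 0, ∀ r ∈ Icc m M, ∀ ρ, 0 ≤ ρ →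
      c * min ((ρ - r) ^ 2) (m / 2 * |ρ - r|) ≤
        k * ρ ^ γ - k * r ^ γ - k * γ * r ^ (γ - 1) * (ρ - r) := by
  have hlo : 0 < m / 2 := half_pos hm
  have hγ0 : 0 < γ - 1 := sub_pos.2 hγ
  set α := k * γ * (γ - 1) * min ((m / 2) ^ (γ - 2)) ((M + m / 2) ^ (γ - 2))
  have hα : 0 < α := by
    have hhi : 0 < M + m / 2 := by linarith
    have := lt_min (rpow_pos_of_pos hlo (γ - 2)) (rpow_pos_of_pos hhi (γ - 2))
    positivity
  refine ⟨α / 2, half_pos hα, ?_⟩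
  rintro r ⟨hmr, hrM⟩ ρ hρ
  have hf (x : ℝ) : HasDerivAt (fun x => k * x ^ γ) (k * γ * x ^ (γ - 1)) x :=
    ((hasDerivAt_rpow_const (Or.inr hγ.le)).const_mul k).congr_deriv (by ring)
  have hf' : ∀ x ∈ interior (Icc (m / 2) (M + m / 2)),
      HasDerivAt (fun x => k * γ * x ^ (γ - 1)) (k * γ * (γ - 1) * x ^ (γ - 2)) x := by
    intro x hx
    rw [interior_Icc] at hx
    have := (hasDerivAt_rpow_const (p := γ - 1) (Or.inl (hlo.trans hx.1).ne')).const_mul (k * γ)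
    exact this.congr_deriv (by rw [show γ - 1 - 1 = γ - 2 by ring]; ring)
  have hα_le :
      ∀ x ∈ interior (Icc (m / 2) (M + m / 2)), α ≤ k * γ * (γ - 1) * x ^ (γ - 2) := by
    intro x hx
    rw [interior_Icc] at hx
    exact mul_le_mul_of_nonneg_left (min_rpow_le_rpow hlo (Ioo_subset_Icc_self hx))
      (by positivity)
  have hconv : ConvexOn ℝ (Ici 0) (fun x => k * x ^ γ) := by
    simpa only [smul_eq_mul] using (convexOn_rpow hγ.le).smul hk.le
  refine hconv.mul_min_le_of_mul_sq_le (mem_Ici.2 (hm.le.trans hmr)) (by positivity) hlo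
    (fun z hz hzr => ?_) (mem_Ici.2 hρ)
  have hr' : r ∈ Icc (m / 2) (M + m / 2) := ⟨by linarith, by linarith⟩
  have hz' : z ∈ Icc (m / 2) (M + m / 2) := by
    rw [abs_le] at hzr
    exact ⟨by linarith, by linarith⟩
  have := add_deriv_mul_sub_add_sq_le_of_le_deriv2 (convex_Icc (m / 2) (M + m / 2))
    (fun x _ => hf x) hf' hα_le hr' hz'
  linarith

theorem exists_abs_sub_mul_le_of_mul_min_le {c d L ε : ℝ} (hc : 0 < c) (hd : 0 < d)
    (hdL : d ≤ L) (hε : 0 < ε) :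
    ∃ C > 0, ∀ r ∈ Icc 0 L, ∀ ρ E t : ℝ, 0 ≤ ρ → 0 ≤ t →
      c * min ((ρ - r) ^ 2) (d * |ρ - r|) ≤ E →
        |ρ - r| * t ≤ C * (E + ρ * t ^ 2) + ε * t ^ 2 := by
  have hL : 0 < L := hd.trans_le hdL
  set C₁ := L / (4 * ε * c * d)
  set C₂ := 1 / (2 * c * d)
  have hC₁ : 0 ≤ C₁ := by positivity
  have hC₂ : 0 ≤ C₂ := by positivity
  refine ⟨C₁ + C₂ + 1 / 2, by positivity, ?_⟩
  rintro r ⟨hr0, hrL⟩ ρ E t hρ ht hE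
  set x := |ρ - r| with hx
  rw [← sq_abs, ← hx] at hE
  have hx0 : 0 ≤ x := abs_nonneg _
  have hE0 : 0 ≤ E := le_trans (by positivity) hE
  have hρt : 0 ≤ ρ * t ^ 2 := by positivity
  rcases le_or_gt x L with hxL | hxL
  · have hsq : c * d * x ^ 2 ≤ L * E := by
      rcases min_choice (x ^ 2) (d * x) with h | h <;> rw [h] at hE <;> nlinarith
    have young : x * t ≤ x ^ 2 / (4 * ε) + ε * t ^ 2 := by
      rw [div_add' _ _ _ (by positivity), le_div_iff₀ (by positivity)]
      nlinarith [sq_nonneg (x - 2 * ε * t)]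
    have hC₁E : x ^ 2 / (4 * ε) ≤ C₁ * E := by
      rw [div_le_iff₀ (by positivity), div_mul_eq_mul_div, div_mul_eq_mul_div,
        le_div_iff₀ (by positivity)]
      nlinarith
    nlinarith
  · -- `r - ρ ≤ r ≤ L < x`, so `x = ρ - r`.
    have hxρ : x ≤ ρ := by rcases abs_cases (ρ - r) with ⟨h, _⟩ | ⟨h, _⟩ <;> linarith
    rw [min_eq_right (by nlinarith)] at hE
    have hC₂E : x / 2 ≤ C₂ * E := by
      rw [one_div_mul_eq_div, le_div_iff₀ (by positivity)]
      linarith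
    nlinarith [mul_nonneg hx0 (sq_nonneg (t - 1))]

theorem density_velocity_cross_term_estimate_general
    (N : ℕ)
    (a γ δ : ℝ) (ha : 0 < a) (hγ : 1 < γ) (hδ0 : 0 < δ) (hδ : δ ≤ 1 / 2)
    (H H' : ℝ → ℝ)
    (hH : ∀ ρ : ℝ, H ρ = a / (γ - 1) * ρ ^ γ)
    (hH' : ∀ r : ℝ, H' r = a * γ / (γ - 1) * r ^ (γ - 1)) :
    ∀ ε > (0 : ℝ), ∃ C > (0 : ℝ),
      ∀ r ∈ Set.Icc (2 * δ) (1 / (2 * δ)), ∀ ρ : ℝ, 0 ≤ ρ →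
        ∀ v : EuclideanSpace ℝ (Fin N),
          |ρ - r| * ‖v‖ ≤
            C * ((H ρ - H' r * (ρ - r) - H r) + ρ * ‖v‖ ^ 2) + ε * ‖v‖ ^ 2 := by
  intro ε hε
  have hm : 0 < 2 * δ := by positivity
  have hmM : 2 * δ ≤ 1 / (2 * δ) := by rw [le_div_iff₀ hm]; nlinarith
  obtain ⟨c, hc, hgrowth⟩ := exists_pos_mul_min_le_rpow_sub_tangent
    (div_pos ha (sub_pos.2 hγ)) hγ hm hmM
  obtain ⟨C, hC, hcross⟩ := exists_abs_sub_mul_le_of_mul_min_le hc (half_pos hm)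
    (by linarith : 2 * δ / 2 ≤ 1 / (2 * δ)) hε
  refine ⟨C, hC, fun r hr ρ hρ v => ?_⟩
  have hE : H ρ - H' r * (ρ - r) - H r = a / (γ - 1) * ρ ^ γ - a / (γ - 1) * r ^ γ
      - a / (γ - 1) * γ * r ^ (γ - 1) * (ρ - r) := by
    rw [hH, hH', hH]; ring
  rw [hE]
  exact hcross r ⟨hm.le.trans hr.1, hr.2⟩ ρ _ ‖v‖ hρ (norm_nonneg v) (hgrowth r hr ρ hρ)

/-- Let `N ≥ 1` be an integer, `a > 0`, `γ > 1`, and `0 < δ ≤ 1/2`. Then for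
every `ε > 0` there exists a constant `C > 0` such that for every `r ∈ [2δ, 1/(2δ)]`, every
`ρ ≥ 0`, and every `v ∈ ℝᴺ`, one has `|ρ − r| · |v| ≤ C (E(ρ|r) + ρ |v|²) + ε |v|²`, where
`E(ρ|r) = H(ρ) − H'(r)(ρ − r) − H(r)` with `H(ρ) = (a/(γ−1)) ρ^γ` and
`H'(r) = (aγ/(γ−1)) r^(γ−1)`, and `|v|` is the Euclidean norm. -/
theorem density_velocity_cross_term_estimate
    (N : ℕ) (hN : 1 ≤ N)
    (a γ δ : ℝ) (ha : 0 < a) (hγ : 1 < γ) (hδ0 : 0 < δ) (hδ : δ ≤ 1 / 2)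
    (H H' : ℝ → ℝ)
    (hH : ∀ ρ : ℝ, H ρ = a / (γ - 1) * ρ ^ γ)
    (hH' : ∀ r : ℝ, H' r = a * γ / (γ - 1) * r ^ (γ - 1)) :
    ∀ ε > (0 : ℝ), ∃ C > (0 : ℝ),
      ∀ r ∈ Set.Icc (2 * δ) (1 / (2 * δ)), ∀ ρ : ℝ, 0 ≤ ρ →
        ∀ v : EuclideanSpace ℝ (Fin N),
          |ρ - r| * ‖v‖ ≤
            C * ((H ρ - H' r * (ρ - r) - H r) + ρ * ‖v‖ ^ 2) + ε * ‖v‖ ^ 2 :=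
  density_velocity_cross_term_estimate_general N a γ δ ha hγ hδ0 hδ H H' hH hH'
end

section
/- Let N ≥ 1 be an integer, a > 0, γ > 1, and 0 < δ ≤ 1/2. Then there exists a constant c > 0 such that for every r ∈ [2δ, 1/(2δ)], every ρ ∈ [δ, 1/δ], and every v ∈ ℝᴺ, one has (1/2) ρ |v|² + E(ρ|r) ≥ c ( |v|² + (ρ − r)² ), where E(ρ|r) = H(ρ) − H'(r)(ρ − r) − H(r) and |v| is the Euclidean norm. -/
open Set

/-- Tangent line inequality for a convex function. -/
lemma tangent_line_le_aux {S : Set ℝ} {f : ℝ → ℝ} (hf : ConvexOn ℝ S f) {r ρ f' : ℝ}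
    (hr : r ∈ S) (hρ : ρ ∈ S) (hd : HasDerivAt f f' r) :
    f r + f' * (ρ - r) ≤ f ρ := by
  rcases lt_trichotomy r ρ with h | h | h
  · have h1 := hf.le_slope_of_hasDerivAt hr hρ h hd
    rw [slope_def_field] at h1
    have h2 : 0 < ρ - r := by linarith
    have := (le_div_iff₀ h2).mp h1
    linarith
  · simp [h]
  · have h1 := hf.slope_le_of_hasDerivAt hρ hr h hd
    rw [slope_def_field] at h1
    have h2 : 0 < r - ρ := by linarith
    have := (div_le_iff₀ h2).mp h1
    nlinarith

/-- Let `N ≥ 1` be an integer, `a > 0`, `γ > 1`, and `0 < δ ≤ 1/2`. Then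
there exists a constant `c > 0` such that for every `r ∈ [2δ, 1/(2δ)]`, every `ρ ∈ [δ, 1/δ]`,
and every `v ∈ ℝᴺ`, one has `(1/2) ρ |v|² + E(ρ|r) ≥ c (|v|² + (ρ − r)²)`, where
`E(ρ|r) = H(ρ) − H'(r)(ρ − r) − H(r)` with `H(ρ) = (a/(γ−1)) ρ^γ`,
`H'(r) = (aγ/(γ−1)) r^(γ−1)`, and `|v|` is the Euclidean norm. -/
theorem relative_energy_integrand_coercive_essential
    (N : ℕ) (hN : 1 ≤ N)
    (a γ δ : ℝ) (ha : 0 < a) (hγ : 1 < γ) (hδ0 : 0 < δ) (hδ : δ ≤ 1 / 2)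
    (H H' : ℝ → ℝ)
    (hH : ∀ ρ : ℝ, H ρ = a / (γ - 1) * ρ ^ γ)
    (hH' : ∀ r : ℝ, H' r = a * γ / (γ - 1) * r ^ (γ - 1)) :
    ∃ c > (0 : ℝ), ∀ r ∈ Set.Icc (2 * δ) (1 / (2 * δ)), ∀ ρ ∈ Set.Icc δ (1 / δ),
      ∀ v : EuclideanSpace ℝ (Fin N),
        c * (‖v‖ ^ 2 + (ρ - r) ^ 2) ≤
          1 / 2 * ρ * ‖v‖ ^ 2 + (H ρ - H' r * (ρ - r) - H r) := by
  have hγ1 : (0:ℝ) < γ - 1 := by linarith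
  set m : ℝ := min (δ ^ (γ - 2)) ((1/δ) ^ (γ - 2)) with hm_def
  have hδinv : (0:ℝ) < 1/δ := by positivity
  have hm : 0 < m := lt_min (Real.rpow_pos_of_pos hδ0 _) (Real.rpow_pos_of_pos hδinv _)
  set C : ℝ := γ * (γ - 1) * m / 2 with hC_def
  have hC : 0 < C := by positivity
  -- the lower bound on x ^ (γ - 2) over the interval
  have hmle : ∀ x ∈ Icc δ (1/δ), m ≤ x ^ (γ - 2) := by
    intro x hx
    rcases le_or_gt 0 (γ - 2) with h2 | h2
    · exact le_trans (min_le_left _ _) (Real.rpow_le_rpow hδ0.le hx.1 h2)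
    · refine le_trans (min_le_right _ _) ?_
      have hxpos : 0 < x := lt_of_lt_of_le hδ0 hx.1
      exact Real.rpow_le_rpow_of_nonpos hxpos hx.2 h2.le
  -- derivatives of k x = x^γ - C x^2
  set k : ℝ → ℝ := fun x => x ^ γ - C * x ^ 2 with hk_def
  set k' : ℝ → ℝ := fun x => γ * x ^ (γ - 1) - C * (2 * x) with hk'_def
  have hk1 : ∀ x : ℝ, HasDerivAt k (k' x) x := by
    intro x
    have h2 : HasDerivAt (fun x : ℝ => C * x ^ 2) (C * (2 * x)) x := by
      simpa using (hasDerivAt_pow 2 x).const_mul C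
    exact (Real.hasDerivAt_rpow_const (Or.inr hγ.le)).sub h2
  have hk2 : ∀ x : ℝ, x ≠ 0 →
      HasDerivAt k' (γ * ((γ - 1) * x ^ (γ - 2)) - C * 2) x := by
    intro x hx
    have h1 := (Real.hasDerivAt_rpow_const (p := γ - 1) (Or.inl hx)).const_mul γ
    have e : γ - 1 - 1 = γ - 2 := by ring
    rw [e] at h1
    have h2 : HasDerivAt (fun x : ℝ => C * (2 * x)) (C * 2) x := by
      simpa using ((hasDerivAt_id x).const_mul (2:ℝ)).const_mul C
    exact h1.sub h2
  -- convexity of k on [δ, 1/δ]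
  have hconv : ConvexOn ℝ (Icc δ (1/δ)) k := by
    apply convexOn_of_hasDerivWithinAt2_nonneg (convex_Icc _ _)
      (f' := k') (f'' := fun x => γ * ((γ - 1) * x ^ (γ - 2)) - C * 2)
    · exact (Differentiable.continuous fun x => (hk1 x).differentiableAt).continuousOn
    · exact fun x _ => (hk1 x).hasDerivWithinAt
    · intro x hx
      rw [interior_Icc] at hx
      exact (hk2 x (ne_of_gt (lt_trans hδ0 hx.1))).hasDerivWithinAt
    · intro x hx
      rw [interior_Icc] at hx
      have h1 := hmle x ⟨hx.1.le, hx.2.le⟩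
      have h2 : 0 < γ * (γ - 1) := by positivity
      rw [hC_def]
      nlinarith
  -- the constant
  refine ⟨min (δ/2) (a * C / (γ - 1)), lt_min (by positivity) (by positivity), ?_⟩
  intro r hr ρ hρ v
  have hrS : r ∈ Icc δ (1/δ) := by
    constructor
    · linarith [hr.1]
    · refine le_trans hr.2 ?_
      apply one_div_le_one_div_of_le hδ0
      linarith
  -- tangent line inequality
  have ht := tangent_line_le_aux hconv hrS hρ (hk1 r)
  simp only [hk_def, hk'_def] at ht
  have hT : C * (ρ - r) ^ 2 ≤ ρ ^ γ - r ^ γ - γ * r ^ (γ - 1) * (ρ - r) := by nlinarith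
  -- assemble
  rw [hH, hH, hH']
  have hE : a / (γ - 1) * ρ ^ γ - a * γ / (γ - 1) * r ^ (γ - 1) * (ρ - r) - a / (γ - 1) * r ^ γ
      = a / (γ - 1) * (ρ ^ γ - r ^ γ - γ * r ^ (γ - 1) * (ρ - r)) := by
    field_simp
    ring
  rw [hE]
  have hmin1 : min (δ/2) (a * C / (γ - 1)) ≤ δ/2 := min_le_left _ _
  have hmin2 : min (δ/2) (a * C / (γ - 1)) ≤ a * C / (γ - 1) := min_le_right _ _
  have hv : (0:ℝ) ≤ ‖v‖ ^ 2 := by positivity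
  have hsq : (0:ℝ) ≤ (ρ - r) ^ 2 := sq_nonneg _
  have hρδ : δ ≤ ρ := hρ.1
  have haγ : 0 < a / (γ - 1) := by positivity
  have h1 : a / (γ - 1) * (C * (ρ - r) ^ 2) ≤
      a / (γ - 1) * (ρ ^ γ - r ^ γ - γ * r ^ (γ - 1) * (ρ - r)) :=
    mul_le_mul_of_nonneg_left hT haγ.le
  have h2 : a * C / (γ - 1) * (ρ - r) ^ 2 = a / (γ - 1) * (C * (ρ - r) ^ 2) := by ring
  nlinarith [mul_le_mul_of_nonneg_right hmin1 hv, mul_le_mul_of_nonneg_right hmin2 hsq,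
    mul_le_mul_of_nonneg_right hρδ hv]
end
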